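/- Let the variance statistic σ²(x) = (1/n) ∑_{i=1}^n (x_i − x̄)², where x̄ = (1/n) ∑_{i=1}^n x_i, viewed as a function on [0,1]^n. Define I(f,k) = −(n+1)(n+2) ∫_{[0,1]^n} f(x)·(x_{(k+1)} − 2x_{(k)} + x_{(k−1)}) dx (conventions x_{(0)}=0, x_{(n+1)}=1). Then for every k ∈ {1,...,n}, I(σ², k) = (n+2)(2k − n − 1) / (n²(n+3)). -/

import Mathlib

open MeasureTheory Finset

/-- The `k`-th order statistic of `x : Fin n → ℝ`, with conventions
`oStat x 0 = 0` and `oStat x k = 1` for `k > n`. For `1 ≤ k ≤ n` it is the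
`k`-th smallest coordinate of `x`. -/
noncomputable def oStat {n : ℕ} (x : Fin n → ℝ) (k : ℕ) : ℝ :=
  if k = 0 then 0
  else if k ≤ n then ((Finset.univ.val.map x).sort (· ≤ ·)).getD (k - 1) 0
  else 1

/-- The `k`-th order statistic of the subfamily `(x i)_{i ∈ S}`. -/
noncomputable def oStatS {n : ℕ} (S : Finset (Fin n)) (x : Fin n → ℝ) (k : ℕ) : ℝ :=
  ((S.val.map x).sort (· ≤ ·)).getD (k - 1) 0

/-- The influence index `I(f,k)` of the `k`-th largest variable on `f`. -/
noncomputable def infl {n : ℕ} (f : (Fin n → ℝ) → ℝ) (k : ℕ) : ℝ :=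
  -((n:ℝ)+1)*((n:ℝ)+2) * ∫ x in Set.Icc (0:Fin n → ℝ) 1,
    f x * (oStat x (k+1) - 2*oStat x k + oStat x (k-1))


/-!
Write `N(t, x) = #{i | x i ≤ t}`. For `0 < t < 1` one has `t < x₍ⱼ₎ ↔ N(t, x) < j` (also for
`j = 0` and `j = n + 1` with the conventions of `oStat`), so the spacing `x₍ₘ₊₁₎ - x₍ₘ₎` is the
length of `{t | N(t, x) = m}` and, by Fubini,
`∫ f(x) (x₍ₘ₊₁₎ - x₍ₘ₎) dx = ∫₀¹ ∫ f(x) 1[N(t, x) = m] dx dt`.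
The event `N(t, x) = m` is the disjoint union, over `|S| = m`, of the boxes on which exactly the
coordinates in `S` are `≤ t`. On such a box the coordinates are independent and uniform, and the
expected empirical variance of independent variables is the empirical variance of their means plus
`(n - 1) / n²` times the sum of their variances. Hence `∫₀¹ ∫ σ²(x) 1[N(t, x) = m] dx dt` is a sum
of Beta integrals, and `I(σ², k)` is `-(n + 1)(n + 2)` times the difference of its values at
`m = k` and `m = k - 1`.
-/

open ProbabilityTheory
open scoped Nat

theorem List.Pairwise.getElem_le_iff_lt_countP {α : Type*} [LinearOrder α] {l : List α}
    (hl : l.Pairwise (· ≤ ·)) (t : α) {i : ℕ} (hi : i < l.length) :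
    l[i] ≤ t ↔ i < l.countP (· ≤ t) := by
  induction l generalizing i with
  | nil => simp at hi
  | cons a l ih =>
    rw [List.pairwise_cons] at hl
    by_cases hat : a ≤ t
    · rcases i with _ | i
      · simp [hat]
      · simp [hat, ih hl.2 (Nat.lt_of_succ_lt_succ hi)]
    · have hl0 : l.countP (· ≤ t) = 0 :=
        List.countP_eq_zero.2 fun b hb hbt => hat ((hl.1 b hb).trans (by simpa using hbt))
      rcases i with _ | i
      · simp [hat, hl0]
      · simpa [hat, hl0] using fun h => hat ((hl.1 _ (List.getElem_mem _)).trans h)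

theorem Finset.sum_ite_mem_univ {ι : Type*} [Fintype ι] [DecidableEq ι] (S : Finset ι)
    (a b : ℝ) : ∑ i, (if i ∈ S then a else b) = #S * a + (Fintype.card ι - #S) * b := by
  rw [sum_ite, sum_const, sum_const, filter_mem_eq_inter, univ_inter, filter_not,
    filter_mem_eq_inter, univ_inter, ← compl_eq_univ_sdiff, card_compl, nsmul_eq_mul,
    nsmul_eq_mul, Nat.cast_sub (card_le_univ S)]

theorem Finset.prod_ite_mem_univ {ι : Type*} [Fintype ι] [DecidableEq ι] (S : Finset ι)
    (a b : ℝ) : ∏ i, (if i ∈ S then a else b) = a ^ #S * b ^ (Fintype.card ι - #S) := by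
  rw [prod_ite, prod_const, prod_const, filter_mem_eq_inter, univ_inter, filter_not,
    filter_mem_eq_inter, univ_inter, ← compl_eq_univ_sdiff, card_compl]

noncomputable def countLe {ι : Type*} [Fintype ι] (t : ℝ) (x : ι → ℝ) : ℕ := #{i | x i ≤ t}

theorem measurable_countLe {ι : Type*} [Fintype ι] :
    Measurable fun p : (ι → ℝ) × ℝ => countLe p.2 p.1 := by
  simp only [countLe, card_filter]
  exact Finset.measurable_sum _ fun i _ =>
    Measurable.ite (measurableSet_le measurable_fst.eval measurable_snd) measurable_const
      measurable_const

section OrderStatistics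

variable {n : ℕ}

theorem countLe_le (t : ℝ) (x : Fin n → ℝ) : countLe t x ≤ n := by
  simpa [countLe] using card_filter_le (univ : Finset (Fin n)) _

theorem oStat_le_iff {j : ℕ} (x : Fin n → ℝ) (hj : 1 ≤ j) (hjn : j ≤ n) (t : ℝ) :
    oStat x j ≤ t ↔ j ≤ countLe t x := by
  set l := (univ.val.map x).sort (· ≤ ·)
  have hlen : j - 1 < l.length := by simp [l]; omega
  have hcount : l.countP (· ≤ t) = countLe t x := by
    rw [← Multiset.coe_countP, Multiset.sort_eq, Multiset.countP_map]
    simp [countLe, Finset.card, Finset.filter_val]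
  rw [oStat, if_neg (by omega), if_pos hjn, List.getD_eq_getElem _ _ hlen,
    (Multiset.pairwise_sort _ _).getElem_le_iff_lt_countP t hlen, hcount]
  omega

theorem lt_oStat_iff {j : ℕ} (x : Fin n → ℝ) {t : ℝ} (ht : t ∈ Set.Ioo 0 1)
    (hj : j ≤ n + 1) : t < oStat x j ↔ countLe t x < j := by
  rcases Nat.eq_zero_or_pos j with rfl | hj0
  · simp [oStat, ht.1.le]
  rcases (show j ≤ n ∨ j = n + 1 by omega) with hjn | rfl
  · rw [← not_le, oStat_le_iff x hj0 hjn, not_le]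
  · simp [oStat, ht.2, Nat.lt_succ_of_le (countLe_le t x)]

theorem oStat_mem_Icc {x : Fin n → ℝ} (hx : x ∈ Set.Icc 0 1) (j : ℕ) :
    oStat x j ∈ Set.Icc (0 : ℝ) 1 := by
  unfold oStat
  split_ifs with hj0 hjn
  · simp
  · set l := (univ.val.map x).sort (· ≤ ·)
    have hlen : j - 1 < l.length := by simp [l]; omega
    rw [List.getD_eq_getElem _ _ hlen]
    obtain ⟨i, -, hi⟩ := Multiset.mem_map.1 ((Multiset.mem_sort _).1 (List.getElem_mem hlen))
    rw [← hi]
    exact ⟨hx.1 i, hx.2 i⟩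
  · simp

theorem setIntegral_indicator_countLe_eq {m : ℕ} {x : Fin n → ℝ} (hx : x ∈ Set.Icc 0 1)
    (hm : m ≤ n) :
    ∫ t in Set.Ioo (0 : ℝ) 1, (if countLe t x = m then (1 : ℝ) else 0) =
      oStat x (m + 1) - oStat x m := by
  have hIio : ∀ a ∈ Set.Icc (0 : ℝ) 1,
      ∫ t in Set.Ioo (0 : ℝ) 1, (Set.Iio a).indicator 1 t = a := by
    intro a ha
    rw [setIntegral_indicator measurableSet_Iio, Set.Ioo_inter_Iio, min_eq_right ha.2]
    simp [ha.1]
  have hint : ∀ a : ℝ, IntegrableOn ((Set.Iio a).indicator 1) (Set.Ioo (0 : ℝ) 1) := fun a =>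
    (integrableOn_const (C := (1 : ℝ)) (by simp)).indicator measurableSet_Iio
  have hpt : Set.EqOn (fun t => if countLe t x = m then (1 : ℝ) else 0)
      (fun t => (Set.Iio (oStat x (m + 1))).indicator 1 t - (Set.Iio (oStat x m)).indicator 1 t)
      (Set.Ioo 0 1) := by
    intro t ht
    simp only [Set.indicator_apply, Set.mem_Iio, lt_oStat_iff x ht (Nat.succ_le_succ hm),
      lt_oStat_iff x ht (hm.trans n.le_succ)]
    split_ifs <;> simp <;> omega
  rw [setIntegral_congr_fun measurableSet_Ioo hpt, integral_sub (hint _) (hint _),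
    hIio _ (oStat_mem_Icc hx _), hIio _ (oStat_mem_Icc hx _)]

end OrderStatistics

theorem integrable_mul_indicator_countLe {ι : Type*} [Fintype ι] {μ : Measure (ι → ℝ)}
    {ν : Measure ℝ} [SFinite μ] [IsFiniteMeasure ν] {f : (ι → ℝ) → ℝ} (hf : Integrable f μ)
    (m : ℕ) :
    Integrable (fun p : (ι → ℝ) × ℝ => f p.1 * if countLe p.2 p.1 = m then 1 else 0)
      (μ.prod ν) :=
  (hf.comp_fst ν).mul_bdd (c := 1)
    (Measurable.ite (measurable_countLe (measurableSet_singleton m)) measurable_const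
      measurable_const).aestronglyMeasurable
    (ae_of_all _ fun p => by split_ifs <;> simp)

section Spacings

variable {n m : ℕ} {f : (Fin n → ℝ) → ℝ}

theorem mul_oStat_sub_eq_integral {x : Fin n → ℝ}
    (hx : x ∈ Set.Icc 0 1) (hm : m ≤ n) :
    f x * (oStat x (m + 1) - oStat x m) =
      ∫ t in Set.Ioo (0 : ℝ) 1, f x * if countLe t x = m then 1 else 0 := by
  rw [integral_const_mul, setIntegral_indicator_countLe_eq hx hm]

theorem integrableOn_mul_oStat_sub (hf : IntegrableOn f (Set.Icc 0 1)) (hm : m ≤ n) :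
    IntegrableOn (fun x => f x * (oStat x (m + 1) - oStat x m)) (Set.Icc 0 1) :=
  (integrable_mul_indicator_countLe (ν := volume.restrict (Set.Ioo 0 1)) hf m).integral_prod_left
    |>.congr <| (ae_restrict_mem measurableSet_Icc).mono fun _ hx =>
      (mul_oStat_sub_eq_integral hx hm).symm

theorem setIntegral_mul_oStat_sub (hf : IntegrableOn f (Set.Icc 0 1)) (hm : m ≤ n) :
    ∫ x in Set.Icc 0 1, f x * (oStat x (m + 1) - oStat x m) =
      ∫ t in Set.Ioo (0 : ℝ) 1, ∫ x in Set.Icc 0 1, f x * if countLe t x = m then 1 else 0 := by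
  rw [setIntegral_congr_fun measurableSet_Icc fun x hx => mul_oStat_sub_eq_integral hx hm]
  exact integral_integral_swap (integrable_mul_indicator_countLe hf m)

end Spacings

section SplitBox

variable {ι : Type*} [DecidableEq ι]

def splitBox (t : ℝ) (S : Finset ι) : Set (ι → ℝ) :=
  Set.univ.pi fun i => if i ∈ S then Set.Icc 0 t else Set.Ioc t 1

theorem measurableSet_splitBox [Countable ι] (t : ℝ) (S : Finset ι) :
    MeasurableSet (splitBox t S) :=
  MeasurableSet.univ_pi fun i => by split_ifs <;> measurability

theorem splitBox_subset_Icc {t : ℝ} (ht0 : 0 ≤ t) (ht1 : t ≤ 1) (S : Finset ι) :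
    splitBox t S ⊆ Set.Icc 0 1 := by
  rw [← Set.pi_univ_Icc]
  refine Set.pi_mono fun i _ => ?_
  split_ifs
  · exact Set.Icc_subset_Icc le_rfl ht1
  · exact fun u hu => ⟨ht0.trans hu.1.le, hu.2⟩

variable [Fintype ι]

theorem mem_splitBox_iff {x : ι → ℝ} (hx : x ∈ Set.Icc 0 1) (t : ℝ) (S : Finset ι) :
    x ∈ splitBox t S ↔ S = ({i | x i ≤ t} : Finset ι) := by
  simp only [splitBox, Set.mem_univ_pi, Finset.ext_iff, mem_filter, mem_univ, true_and]
  refine forall_congr' fun i => ?_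
  obtain ⟨h0, h1⟩ : 0 ≤ x i ∧ x i ≤ 1 := ⟨hx.1 i, hx.2 i⟩
  split_ifs with hi <;> simp [hi, h0, h1]

theorem setIntegral_mul_indicator_countLe_eq_sum {f : (ι → ℝ) → ℝ}
    (hf : IntegrableOn f (Set.Icc 0 1)) {t : ℝ} (ht0 : 0 ≤ t) (ht1 : t ≤ 1) (m : ℕ) :
    ∫ x in Set.Icc 0 1, f x * (if countLe t x = m then 1 else 0) =
      ∑ S ∈ powersetCard m univ, ∫ x in splitBox t S, f x := by
  have hpt : Set.EqOn (fun x => f x * if countLe t x = m then 1 else 0)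
      (fun x => ∑ S ∈ powersetCard m univ, (splitBox t S).indicator f x) (Set.Icc 0 1) := by
    intro x hx
    classical
    simp only [Set.indicator_apply, mem_splitBox_iff hx, sum_ite_eq', mem_powersetCard_univ]
    split_ifs with h h' h' <;> first | exact absurd h h' | exact absurd h' h | simp
  rw [setIntegral_congr_fun measurableSet_Icc hpt,
    integral_finsetSum _ fun S _ => hf.indicator (measurableSet_splitBox t S)]
  refine sum_congr rfl fun S _ => ?_
  rw [setIntegral_indicator (measurableSet_splitBox t S),
    Set.inter_eq_self_of_subset_right (splitBox_subset_Icc ht0 ht1 S)]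

end SplitBox

section EmpiricalVariance

variable {n : ℕ}

noncomputable def empiricalVariance (x : Fin n → ℝ) : ℝ :=
  (1 / (n : ℝ)) * ∑ i, (x i - (1 / (n : ℝ)) * ∑ i', x i') ^ 2

theorem integrableOn_Icc_empiricalVariance (n : ℕ) :
    IntegrableOn (empiricalVariance (n := n)) (Set.Icc 0 1) :=
  (by unfold empiricalVariance; fun_prop : Continuous (empiricalVariance (n := n)))
    |>.continuousOn.integrableOn_compact isCompact_Icc

theorem empiricalVariance_eq (x : Fin n → ℝ) :
    empiricalVariance x = 1 / n * ∑ i, x i * x i - (1 / n) ^ 2 * ∑ i, ∑ j, x i * x j := by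
  rcases Nat.eq_zero_or_pos n with rfl | hn
  · simp [empiricalVariance]
  have hn' : (n : ℝ) ≠ 0 := by positivity
  simp only [empiricalVariance, sub_sq, sum_add_distrib, sum_sub_distrib, ← mul_sum, ← sum_mul,
    sum_const, card_univ, Fintype.card_fin, nsmul_eq_mul]
  field_simp
  ring

theorem empiricalVariance_ite (S : Finset (Fin n)) (a b : ℝ) :
    empiricalVariance (fun i => if i ∈ S then a else b) =
      #S * (n - #S) / n ^ 2 * (a - b) ^ 2 := by
  rcases Nat.eq_zero_or_pos n with rfl | hn
  · simp [empiricalVariance]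
  have hn' : (n : ℝ) ≠ 0 := by positivity
  have hsq : ∀ i, (if i ∈ S then a else b) * (if i ∈ S then a else b) =
      if i ∈ S then a * a else b * b := fun i => by split_ifs <;> rfl
  rw [empiricalVariance_eq, ← sum_mul_sum]
  simp only [hsq, sum_ite_mem_univ, Fintype.card_fin]
  field_simp
  ring

variable {ι : Type*} [Fintype ι] {ν : ι → Measure ℝ} [∀ i, IsProbabilityMeasure (ν i)]

theorem integrable_mul_eval_pi (hν : ∀ i, MemLp id 2 (ν i)) (i j : ι) :
    Integrable (fun x => x i * x j) (Measure.pi ν) :=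
  ((hν i).comp_measurePreserving (measurePreserving_eval ν i)).integrable_mul
    ((hν j).comp_measurePreserving (measurePreserving_eval ν j))

theorem integral_mul_eval_pi [DecidableEq ι] (hν : ∀ i, MemLp id 2 (ν i)) (i j : ι) :
    ∫ x, x i * x j ∂Measure.pi ν =
      (∫ u, u ∂ν i) * (∫ u, u ∂ν j) + if i = j then Var[id; ν i] else 0 := by
  rcases eq_or_ne i j with rfl | hij
  · rw [if_pos rfl, variance_eq_sub (hν i),
      integral_comp_eval (f := fun u => u * u) (by fun_prop)]
    simp [sq]
  · have hindep : IndepFun (fun x : ι → ℝ => x i) (fun x => x j) (Measure.pi ν) :=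
      (iIndepFun_pi (μ := ν) (X := fun _ => id) fun _ => aemeasurable_id).indepFun hij
    rw [if_neg hij, add_zero, hindep.integral_fun_mul_eq_mul_integral
      (measurable_pi_apply i).aestronglyMeasurable (measurable_pi_apply j).aestronglyMeasurable,
      integral_eval, integral_eval]

theorem integral_empiricalVariance_pi {ν : Fin n → Measure ℝ}
    [∀ i, IsProbabilityMeasure (ν i)] (hν : ∀ i, MemLp id 2 (ν i)) :
    ∫ x, empiricalVariance x ∂Measure.pi ν =
      empiricalVariance (fun i => ∫ u, u ∂ν i) + (n - 1) / n ^ 2 * ∑ i, Var[id; ν i] := by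
  have hint := integrable_mul_eval_pi hν
  have hint₂ : ∀ i, Integrable (fun x => ∑ j, x i * x j) (Measure.pi ν) := fun i =>
    integrable_finsetSum _ fun j _ => hint i j
  simp_rw [empiricalVariance_eq]
  rw [integral_sub ((integrable_finsetSum _ fun i _ => hint i i).const_mul _)
      ((integrable_finsetSum _ fun i _ => hint₂ i).const_mul _),
    integral_const_mul, integral_const_mul, integral_finsetSum _ fun i _ => hint i i,
    integral_finsetSum _ fun i _ => hint₂ i]
  simp_rw [integral_finsetSum _ fun j _ => hint _ j, integral_mul_eval_pi hν, sum_add_distrib,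
    sum_ite_eq, mem_univ, if_true]
  rcases Nat.eq_zero_or_pos n with rfl | hn
  · simp
  have hn' : (n : ℝ) ≠ 0 := by positivity
  field_simp
  ring

end EmpiricalVariance

section UniformOnIoc

variable {a b : ℝ}

theorem isProbabilityMeasure_cond_Ioc (hab : a < b) :
    IsProbabilityMeasure volume[|Set.Ioc a b] :=
  cond_isProbabilityMeasure_of_finite (by simp [hab]) (by simp)

theorem integral_cond_Ioc (hab : a < b) (g : ℝ → ℝ) :
    ∫ u, g u ∂volume[|Set.Ioc a b] = (∫ u in a..b, g u) / (b - a) := by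
  rw [ProbabilityTheory.cond, integral_smul_measure, Real.volume_Ioc, ENNReal.toReal_inv,
    ENNReal.toReal_ofReal (sub_nonneg.2 hab.le), intervalIntegral.integral_of_le hab.le,
    smul_eq_mul, inv_mul_eq_div]

theorem memLp_id_cond_Ioc : MemLp id 2 volume[|Set.Ioc a b] :=
  MemLp.of_bound aestronglyMeasurable_id (max |a| |b|)
    ((ae_cond_mem measurableSet_Ioc).mono fun _ hu => abs_le_max_abs_abs hu.1.le hu.2)

theorem integral_id_cond_Ioc (hab : a < b) : ∫ u, u ∂volume[|Set.Ioc a b] = (a + b) / 2 := by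
  have : b - a ≠ 0 := (sub_pos.2 hab).ne'
  rw [integral_cond_Ioc hab, integral_id]
  field_simp
  ring

theorem variance_id_cond_Ioc (hab : a < b) :
    Var[id; volume[|Set.Ioc a b]] = (b - a) ^ 2 / 12 := by
  have := isProbabilityMeasure_cond_Ioc hab
  have : b - a ≠ 0 := (sub_pos.2 hab).ne'
  rw [variance_eq_sub memLp_id_cond_Ioc]
  simp only [Pi.pow_apply, id]
  rw [integral_cond_Ioc hab, integral_cond_Ioc hab, integral_pow, integral_id]
  field_simp
  ring

end UniformOnIoc

section Boxes

variable {ι : Type*} [Fintype ι] {a b : ι → ℝ}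

theorem restrict_univ_pi_Ioc (hab : ∀ i, a i < b i) :
    volume.restrict (Set.univ.pi fun i => Set.Ioc (a i) (b i)) =
      ENNReal.ofReal (∏ i, (b i - a i)) • Measure.pi fun i => volume[|Set.Ioc (a i) (b i)] := by
  rw [volume_pi, Measure.restrict_pi_pi]
  refine Measure.pi_eq fun s _ => ?_
  rw [Measure.smul_apply, Measure.pi_pi,
    ENNReal.ofReal_prod_of_nonneg fun i _ => (sub_pos.2 (hab i)).le, smul_eq_mul,
    ← prod_mul_distrib]
  refine prod_congr rfl fun i _ => ?_
  rw [ProbabilityTheory.cond, Measure.smul_apply, smul_eq_mul, ← mul_assoc, Real.volume_Ioc,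
    ENNReal.mul_inv_cancel (by simpa using hab i) ENNReal.ofReal_ne_top, one_mul]

theorem setIntegral_univ_pi_Ioc (hab : ∀ i, a i < b i) (F : (ι → ℝ) → ℝ) :
    ∫ x in Set.univ.pi fun i => Set.Ioc (a i) (b i), F x =
      (∏ i, (b i - a i)) * ∫ x, F x ∂Measure.pi fun i => volume[|Set.Ioc (a i) (b i)] := by
  rw [restrict_univ_pi_Ioc hab, integral_smul_measure,
    ENNReal.toReal_ofReal (prod_nonneg fun i _ => (sub_pos.2 (hab i)).le), smul_eq_mul]

end Boxes

theorem setIntegral_splitBox_empiricalVariance {n : ℕ} {t : ℝ} (ht : t ∈ Set.Ioo 0 1)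
    (S : Finset (Fin n)) :
    ∫ x in splitBox t S, empiricalVariance x = t ^ #S * (1 - t) ^ (n - #S) *
      ((#S * (n - #S) / 4 + (n - 1) * (#S * t ^ 2 + (n - #S) * (1 - t) ^ 2) / 12) / n ^ 2) := by
  set a : Fin n → ℝ := fun i => if i ∈ S then 0 else t
  set b : Fin n → ℝ := fun i => if i ∈ S then t else 1
  have hab : ∀ i, a i < b i := fun i => by
    simp only [a, b]
    split_ifs <;> linarith [ht.1, ht.2]
  have hbox : splitBox t S =ᵐ[volume] Set.univ.pi fun i => Set.Ioc (a i) (b i) := by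
    refine Measure.ae_eq_set_pi fun i _ => ?_
    simp only [a, b]
    split_ifs
    · exact Ioc_ae_eq_Icc.symm
    · rfl
  have := fun i => isProbabilityMeasure_cond_Ioc (hab i)
  have hmean : (fun i => ∫ u, u ∂volume[|Set.Ioc (a i) (b i)]) =
      fun i => if i ∈ S then t / 2 else (t + 1) / 2 := by
    funext i
    rw [integral_id_cond_Ioc (hab i)]
    simp only [a, b]
    split_ifs <;> ring
  have hvar : ∀ i, Var[id; volume[|Set.Ioc (a i) (b i)]] =
      if i ∈ S then t ^ 2 / 12 else (1 - t) ^ 2 / 12 := fun i => by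
    rw [variance_id_cond_Ioc (hab i)]
    simp only [a, b]
    split_ifs <;> ring
  have hvol : ∏ i, (b i - a i) = t ^ #S * (1 - t) ^ (n - #S) := by
    simp only [a, b, apply_ite₂ (· - ·), sub_zero, prod_ite_mem_univ, Fintype.card_fin]
  rw [setIntegral_congr_set hbox, setIntegral_univ_pi_Ioc hab,
    integral_empiricalVariance_pi fun _ => memLp_id_cond_Ioc, hmean, empiricalVariance_ite,
    hvol]
  simp only [hvar, sum_ite_mem_univ, Fintype.card_fin]
  ring

theorem integral_pow_mul_one_sub_pow (a b : ℕ) :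
    ∫ t in (0 : ℝ)..1, t ^ a * (1 - t) ^ b = a ! * b ! / (a + b + 1)! := by
  induction b generalizing a with
  | zero =>
    simp only [pow_zero, mul_one, integral_pow, Nat.factorial_succ]
    push_cast
    field_simp
    simp
  | succ b ih =>
    have hsplit : ∀ t : ℝ,
        t ^ a * (1 - t) ^ (b + 1) = t ^ a * (1 - t) ^ b - t ^ (a + 1) * (1 - t) ^ b :=
      fun t => by ring
    simp_rw [hsplit]
    rw [intervalIntegral.integral_sub (Continuous.intervalIntegrable (by fun_prop) _ _)
      (Continuous.intervalIntegrable (by fun_prop) _ _), ih a, ih (a + 1),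
      show a + 1 + b + 1 = a + b + 1 + 1 by ring, show a + (b + 1) + 1 = a + b + 1 + 1 by ring,
      Nat.factorial_succ (a + b + 1), Nat.factorial_succ a, Nat.factorial_succ b]
    push_cast
    field_simp
    ring

theorem integral_choose_mul_pow_mul_one_sub_pow_mul {n m : ℕ} (hm : m ≤ n) (A B C : ℝ) :
    ∫ t in (0 : ℝ)..1,
        n.choose m * (t ^ m * (1 - t) ^ (n - m) * (A + B * t ^ 2 + C * (1 - t) ^ 2)) =
      A / (n + 1) + (B * (m + 1) * (m + 2) + C * (n - m + 1) * (n - m + 2)) /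
        ((n + 1) * (n + 2) * (n + 3)) := by
  obtain ⟨d, rfl⟩ := Nat.exists_eq_add_of_le hm
  have hchoose : ((m + d).choose m : ℝ) = (m + d)! / (m ! * d !) := by
    rw [Nat.cast_choose ℝ hm, Nat.add_sub_cancel_left]
  have hexpand : ∀ t : ℝ, ((m + d).choose m : ℝ) * (t ^ m * (1 - t) ^ (m + d - m) *
      (A + B * t ^ 2 + C * (1 - t) ^ 2)) = ((m + d).choose m * A) * (t ^ m * (1 - t) ^ d) +
        ((m + d).choose m * B) * (t ^ (m + 2) * (1 - t) ^ d) +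
        ((m + d).choose m * C) * (t ^ m * (1 - t) ^ (d + 2)) := fun t => by
    rw [Nat.add_sub_cancel_left]
    ring
  have hint : ∀ (c : ℝ) (a b : ℕ),
      IntervalIntegrable (fun t : ℝ => c * (t ^ a * (1 - t) ^ b)) volume 0 1 :=
    fun c a b => Continuous.intervalIntegrable (by fun_prop) _ _
  simp_rw [hexpand]
  rw [intervalIntegral.integral_add ((hint _ _ _).add (hint _ _ _)) (hint _ _ _),
    intervalIntegral.integral_add (hint _ _ _) (hint _ _ _), intervalIntegral.integral_const_mul,
    intervalIntegral.integral_const_mul, intervalIntegral.integral_const_mul,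
    integral_pow_mul_one_sub_pow, integral_pow_mul_one_sub_pow, integral_pow_mul_one_sub_pow,
    hchoose, show m + 2 + d + 1 = m + d + 1 + 1 + 1 by ring,
    show m + (d + 2) + 1 = m + d + 1 + 1 + 1 by ring]
  simp only [Nat.factorial_succ]
  push_cast
  field_simp
  ring

theorem setIntegral_empiricalVariance_mul_oStat_sub {n m : ℕ} (hm : m ≤ n) :
    ∫ x in Set.Icc (0 : Fin n → ℝ) 1, empiricalVariance x * (oStat x (m + 1) - oStat x m) =
      (m * (n - m) / (4 * (n + 1)) + (n - 1) * (m * (m + 1) * (m + 2) +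
        (n - m) * (n - m + 1) * (n - m + 2)) / (12 * (n + 1) * (n + 2) * (n + 3))) / n ^ 2 := by
  have hσ := integrableOn_Icc_empiricalVariance n
  have hslice : ∀ t ∈ Set.Ioo (0 : ℝ) 1,
      ∫ x in Set.Icc (0 : Fin n → ℝ) 1,
          empiricalVariance x * (if countLe t x = m then 1 else 0) =
        n.choose m * (t ^ m * (1 - t) ^ (n - m) *
          ((m * (n - m) / 4 + (n - 1) * (m * t ^ 2 + (n - m) * (1 - t) ^ 2) / 12) / n ^ 2)) := by
    intro t ht
    rw [setIntegral_mul_indicator_countLe_eq_sum hσ ht.1.le ht.2.le,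
      sum_congr rfl fun S hS => by
        rw [setIntegral_splitBox_empiricalVariance ht, mem_powersetCard_univ.1 hS],
      sum_const, card_powersetCard, card_univ, Fintype.card_fin, nsmul_eq_mul]
  have hquad : ∀ t : ℝ,
      (m * (n - m) / 4 + (n - 1) * (m * t ^ 2 + (n - m) * (1 - t) ^ 2) / 12) / (n : ℝ) ^ 2 =
        m * (n - m) / (4 * n ^ 2) + (n - 1) * m / (12 * n ^ 2) * t ^ 2 +
          (n - 1) * (n - m) / (12 * n ^ 2) * (1 - t) ^ 2 := fun t => by ring
  rw [setIntegral_mul_oStat_sub hσ hm, setIntegral_congr_fun measurableSet_Ioo hslice,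
    ← integral_Ioc_eq_integral_Ioo, ← intervalIntegral.integral_of_le zero_le_one]
  simp_rw [hquad]
  rw [integral_choose_mul_pow_mul_one_sub_pow_mul hm]
  field_simp

theorem stmt19_general (n : ℕ) (k : ℕ) (hk : 1 ≤ k) (hkn : k ≤ n) :
    infl (fun x : Fin n → ℝ =>
        (1 / (n : ℝ)) * ∑ i, (x i - (1 / (n : ℝ)) * ∑ i', x i') ^ 2) k =
      ((n : ℝ) + 2) * (2 * (k : ℝ) - (n : ℝ) - 1) / ((n : ℝ) ^ 2 * ((n : ℝ) + 3)) := by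
  have hσ := integrableOn_Icc_empiricalVariance n
  have hdiff : ∀ x : Fin n → ℝ,
      empiricalVariance x * (oStat x (k + 1) - 2 * oStat x k + oStat x (k - 1)) =
        empiricalVariance x * (oStat x (k + 1) - oStat x k) -
          empiricalVariance x * (oStat x (k - 1 + 1) - oStat x (k - 1)) := fun x => by
    rw [Nat.sub_add_cancel hk]
    ring
  have hn : (n : ℝ) ≠ 0 := Nat.cast_ne_zero.2 (by omega)
  change infl empiricalVariance k = _
  rw [infl, integral_congr_ae (ae_of_all _ hdiff),
    integral_sub (integrableOn_mul_oStat_sub hσ hkn) (integrableOn_mul_oStat_sub hσ (by omega)),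
    setIntegral_empiricalVariance_mul_oStat_sub hkn,
    setIntegral_empiricalVariance_mul_oStat_sub (by omega : k - 1 ≤ n), Nat.cast_sub hk]
  field_simp
  ring

theorem stmt19 (n : ℕ) (hn : 1 ≤ n) (k : ℕ) (hk : 1 ≤ k) (hkn : k ≤ n) :
    infl (fun x : Fin n → ℝ =>
        (1 / (n : ℝ)) * ∑ i, (x i - (1 / (n : ℝ)) * ∑ i', x i') ^ 2) k =
      ((n : ℝ) + 2) * (2 * (k : ℝ) - (n : ℝ) - 1) / ((n : ℝ) ^ 2 * ((n : ℝ) + 3)) :=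
  stmt19_general n k hk hkn
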